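/- If φ : ℝ × X → X is a kinematic expansive flow on a compact metric space X, then for every T ≠ 0 the time-T homeomorphism φ_T is partially expansive with central dimension D = 1. -/

import Mathlib

open Metric Set

variable {X : Type*} [MetricSpace X]

/-- mesh of a family of sets is < ε -/
def MeshLT (𝒰 : Set (Set X)) (ε : ℝ) : Prop := ∀ A ∈ 𝒰, Metric.diam A < ε

/-- the order of a family of sets is ≤ n : every subfamily with more than n+1
elements has empty intersection -/
def OrdLE (𝒰 : Set (Set X)) (n : ℕ) : Prop :=
  ∀ 𝒱 : Finset (Set X), ↑𝒱 ⊆ 𝒰 → n + 1 < 𝒱.card → ⋂₀ (𝒱 : Set (Set X)) = ∅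

/-- the ε-dimension of Y is ≤ n -/
def DimEpsLE (Y : Set X) (ε : ℝ) (n : ℕ) : Prop :=
  ∃ 𝒰 : Set (Set X), (∀ A ∈ 𝒰, IsOpen A) ∧ Y ⊆ ⋃₀ 𝒰 ∧ MeshLT 𝒰 ε ∧ OrdLE 𝒰 n

/-- the ε-dimension of Y, as an extended natural number -/
noncomputable def dimEps (Y : Set X) (ε : ℝ) : ℕ∞ :=
  sInf {d : ℕ∞ | ∃ n : ℕ, d = n ∧ DimEpsLE Y ε n}

/-- the topological (covering) dimension of Y, as lim_{ε→0} dim_ε Y -/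
noncomputable def topDim (Y : Set X) : ℕ∞ :=
  ⨆ (ε : ℝ) (_ : 0 < ε), dimEps Y ε

/-- dim Y > D, for an integer D ≥ -1 (nonempty sets have dimension ≥ 0 > -1) -/
def DimGT (Y : Set X) (D : ℤ) : Prop := D < 0 ∨ ((D.toNat : ℕ∞) < topDim Y)

/-- the n-th iterate (n ∈ ℤ) of a homeomorphism -/
def hiter (f : X ≃ₜ X) (n : ℤ) : X → X := ⇑(f.toEquiv ^ n)

/-- partially expansive with central dimension D and expansive constant ε -/
def PartiallyExpansive (f : X ≃ₜ X) (D : ℤ) (ε : ℝ) : Prop :=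
  ∀ C : Set X, IsCompact C → C.Nontrivial → DimGT C D →
    ∃ k : ℤ, ε ≤ Metric.diam (hiter f k '' C)

/-
If all iterates `φ_{kT} C` have small diameter, uniform continuity of `φ` on `[-|T|, |T|] × X`
makes the whole orbits of any two points of `C` stay δ₀-close, so by kinematic expansivity `C` lies
in the orbit segment `φ([-1, 1]) x` of any of its points. The periods of `x` form a closed subgroup
of `ℝ`, so the orbit map `t ↦ φ t x` is constant, injective, or periodic with injective restriction
to a half-open period. In each case a short orbit segment is covered, for every `η > 0`, by finitely
many small compact arcs of which only cyclically consecutive ones meet; slightly thickened they form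
an open cover of mesh `< η` and order `≤ 1`, so the segment has dimension at most `1`.
-/

open Filter Topology

theorem DimEpsLE.mono {Y Z : Set X} {ε : ℝ} {n : ℕ} (hYZ : Y ⊆ Z) (hZ : DimEpsLE Z ε n) :
    DimEpsLE Y ε n :=
  let ⟨𝒰, hopen, hcover, hmesh, hord⟩ := hZ
  ⟨𝒰, hopen, hYZ.trans hcover, hmesh, hord⟩

theorem not_dimGT_of_forall_dimEpsLE {Y : Set X} {n : ℕ} (h : ∀ ε, 0 < ε → DimEpsLE Y ε n) :
    ¬ DimGT Y n := by
  have htop : topDim Y ≤ n := iSup₂_le fun ε hε => sInf_le ⟨n, rfl, h ε hε⟩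
  rintro (hneg | hlt)
  · exact (Int.natCast_nonneg n).not_gt hneg
  · rw [Int.toNat_natCast] at hlt
    exact hlt.not_ge htop

theorem dimEpsLE_singleton (x : X) {ε : ℝ} (hε : 0 < ε) (n : ℕ) : DimEpsLE {x} ε n := by
  refine ⟨{ball x (ε / 3)}, ?_, ?_, ?_, ?_⟩
  · rintro _ rfl
    exact isOpen_ball
  · simpa using (mem_ball_self (by positivity) : x ∈ ball x (ε / 3))
  · rintro _ rfl
    linarith [(diam_ball (by positivity) : diam (ball x (ε / 3)) ≤ 2 * (ε / 3))]
  · intro 𝒱 h𝒱 hcard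
    have : 𝒱.card ≤ 1 := Finset.card_le_one.2 fun A hA B hB => (h𝒱 hA).trans (h𝒱 hB).symm
    omega

theorem ordLE_one_of_forall_disjoint {α : Type*} {𝒰 : Set (Set α)}
    (h : ∀ A ∈ 𝒰, ∀ B ∈ 𝒰, ∀ E ∈ 𝒰, A ≠ B → A ≠ E → B ≠ E →
      Disjoint A B ∨ Disjoint A E ∨ Disjoint B E) :
    OrdLE 𝒰 1 := by
  intro 𝒱 h𝒱 hcard
  obtain ⟨A, hA, B, hB, E, hE, hAB, hAE, hBE⟩ := Finset.two_lt_card.1 hcard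
  have hempty : ∀ P ∈ 𝒱, ∀ Q ∈ 𝒱, Disjoint P Q → ⋂₀ (𝒱 : Set (Set α)) = ∅ :=
    fun P hP Q hQ hPQ => subset_empty_iff.1 <|
      (subset_inter (sInter_subset_of_mem hP) (sInter_subset_of_mem hQ)).trans hPQ.inter_eq.subset
  rcases h A (h𝒱 hA) B (h𝒱 hB) E (h𝒱 hE) hAB hAE hBE with h | h | h
  exacts [hempty A hA B hB h, hempty A hA E hE h, hempty B hB E hE h]

/-- Thickening the pieces by a common small radius keeps the disjoint pairs disjoint. -/
theorem dimEpsLE_one_of_isCompact_cover {ι : Type*} [Finite ι] {F : ι → Set X} {C : Set X}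
    {η : ℝ} (hη : 0 < η) (hF : ∀ i, IsCompact (F i)) (hC : C ⊆ ⋃ i, F i)
    (hdiam : ∀ i, diam (F i) ≤ η / 2)
    (hdisj : ∀ i j k, i ≠ j → i ≠ k → j ≠ k →
      Disjoint (F i) (F j) ∨ Disjoint (F i) (F k) ∨ Disjoint (F j) (F k)) :
    DimEpsLE C η 1 := by
  have hsmall : ∀ᶠ r in 𝓝[>] (0 : ℝ), r < η / 4 ∧ ∀ i j, Disjoint (F i) (F j) →
      Disjoint (thickening r (F i)) (thickening r (F j)) := by
    refine .and ?_ (eventually_all.2 fun i => eventually_all.2 fun j => ?_)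
    · exact eventually_nhdsWithin_of_eventually_nhds (eventually_lt_nhds (by positivity))
    · by_cases h : Disjoint (F i) (F j)
      · obtain ⟨d, hd, hdd⟩ := h.exists_thickenings (hF i) (hF j).isClosed
        filter_upwards [Ioo_mem_nhdsGT hd] with r hr _
        exact hdd.mono (thickening_mono hr.2.le _) (thickening_mono hr.2.le _)
      · exact .of_forall fun _ h' => absurd h' h
  obtain ⟨r, ⟨hrη, hr⟩, hr0⟩ := (hsmall.and self_mem_nhdsWithin).exists
  refine ⟨range fun i => thickening r (F i), ?_, ?_, ?_, ?_⟩
  · rintro _ ⟨i, rfl⟩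
    exact isOpen_thickening
  · rw [sUnion_range]
    exact hC.trans (iUnion_mono fun i => self_subset_thickening hr0 _)
  · rintro _ ⟨i, rfl⟩
    linarith [diam_thickening_le (F i) hr0.le, hdiam i]
  · refine ordLE_one_of_forall_disjoint ?_
    rintro _ ⟨i, rfl⟩ _ ⟨j, rfl⟩ _ ⟨k, rfl⟩ hij hik hjk
    rcases hdisj i j k (fun h => hij (h ▸ rfl)) (fun h => hik (h ▸ rfl)) (fun h => hjk (h ▸ rfl))
      with h | h | h
    exacts [.inl (hr i j h), .inr (.inl (hr i k h)), .inr (.inr (hr j k h))]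

theorem exists_fin_mem_Icc {N : ℕ} (hN : 0 < N) {u : ℝ} (hu : u ∈ Icc (0 : ℝ) N) :
    ∃ i : Fin N, u ∈ Icc (i : ℝ) (i + 1) := by
  rcases lt_or_ge ⌊u⌋₊ N with h | h
  · exact ⟨⟨_, h⟩, Nat.floor_le hu.1, (Nat.lt_floor_add_one u).le⟩
  · have hNu : (N : ℝ) ≤ u := (Nat.le_floor_iff hu.1).1 h
    refine ⟨⟨N - 1, by omega⟩, ?_, ?_⟩ <;> simp only [Nat.cast_pred hN] <;> linarith [hu.2]

/-- Only cyclically consecutive unit arcs meet, and for `N ≥ 4` no three arcs are pairwise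
consecutive. -/
theorem dimEpsLE_one_image_Icc_natCast {γ : ℝ → X} (hγ : Continuous γ) {N : ℕ} (hN : 4 ≤ N)
    (hsep : ∀ s ∈ Icc (0 : ℝ) N, ∀ t ∈ Icc (0 : ℝ) N, γ s = γ t →
      s = t ∨ s = 0 ∧ t = N ∨ s = N ∧ t = 0)
    {η : ℝ} (hη : 0 < η) (hdiam : ∀ i : ℕ, i < N → diam (γ '' Icc (i : ℝ) (i + 1)) ≤ η / 2) :
    DimEpsLE (γ '' Icc 0 N) η 1 := by
  set F : Fin N → Set X := fun i => γ '' Icc (i : ℝ) (i + 1)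
  have hsub : ∀ i : Fin N, Icc (i : ℝ) (i + 1) ⊆ Icc 0 N := fun i =>
    Icc_subset_Icc (Nat.cast_nonneg _) (by exact_mod_cast i.isLt)
  have hnear : ∀ i j : Fin N, ¬ Disjoint (F i) (F j) →
      (i : ℕ) ≤ j + 1 ∧ (j : ℕ) ≤ i + 1 ∨ (i : ℕ) = 0 ∧ (j : ℕ) + 1 = N ∨
        (j : ℕ) = 0 ∧ (i : ℕ) + 1 = N := by
    intro i j hij
    obtain ⟨_, ⟨s, hs, rfl⟩, t, ht, hts⟩ := not_disjoint_iff.1 hij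
    have hi := i.isLt
    have hj := j.isLt
    rcases hsep s (hsub i hs) t (hsub j ht) hts.symm with rfl | ⟨rfl, rfl⟩ | ⟨rfl, rfl⟩
    · exact .inl ⟨by exact_mod_cast hs.1.trans ht.2, by exact_mod_cast ht.1.trans hs.2⟩
    · have : (i : ℕ) ≤ 0 := by exact_mod_cast hs.1
      have : N ≤ (j : ℕ) + 1 := by exact_mod_cast ht.2
      omega
    · have : (j : ℕ) ≤ 0 := by exact_mod_cast ht.1
      have : N ≤ (i : ℕ) + 1 := by exact_mod_cast hs.2
      omega
  refine dimEpsLE_one_of_isCompact_cover (F := F) hη (fun i => isCompact_Icc.image hγ) ?_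
    (fun i => hdiam i i.isLt) fun i j k hij hik hjk => ?_
  · rintro _ ⟨u, hu, rfl⟩
    obtain ⟨i, hi⟩ := exists_fin_mem_Icc (by omega) hu
    exact mem_iUnion.2 ⟨i, mem_image_of_mem γ hi⟩
  · by_contra! h
    have := hnear i j h.1
    have := hnear i k h.2.1
    have := hnear j k h.2.2
    have := Fin.val_ne_of_ne hij
    have := Fin.val_ne_of_ne hik
    have := Fin.val_ne_of_ne hjk
    omega

theorem dimEpsLE_one_image_Icc {γ : ℝ → X} (hγ : Continuous γ) {A B : ℝ} (hAB : A < B)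
    (hsep : ∀ s ∈ Icc A B, ∀ t ∈ Icc A B, γ s = γ t → s = t ∨ s = A ∧ t = B ∨ s = B ∧ t = A)
    {η : ℝ} (hη : 0 < η) :
    DimEpsLE (γ '' Icc A B) η 1 := by
  obtain ⟨θ, hθ, hγθ⟩ := Metric.uniformContinuousOn_iff.1
    (isCompact_Icc.uniformContinuousOn_of_continuous hγ.continuousOn) (η / 2) (by positivity)
  obtain ⟨N, hN⟩ := exists_nat_gt (max 3 ((B - A) / θ))
  have hN0 : (0 : ℝ) < N := by linarith [le_max_left 3 ((B - A) / θ)]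
  set h := (B - A) / N
  have hh : 0 < h := div_pos (by linarith) hN0
  have hhθ : h < θ := by
    rw [div_lt_iff₀ hN0, mul_comm, ← div_lt_iff₀ hθ]
    exact (le_max_right _ _).trans_lt hN
  set c : ℝ → ℝ := fun u => h * u + A
  have hc : StrictMono c := fun u v huv => by simp only [c]; gcongr
  have hcI : c '' Icc 0 N = Icc A B := by
    simp only [c, image_affine_Icc' hh, mul_zero, zero_add, h]
    rw [div_mul_cancel₀ _ hN0.ne', sub_add_cancel]
  have hcmaps : MapsTo c (Icc 0 N) (Icc A B) := hcI ▸ mapsTo_image c _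
  have hc0 : c 0 = A := by simp [c]
  have hcN : c N = B := by simp only [c, h]; rw [div_mul_cancel₀ _ hN0.ne', sub_add_cancel]
  have hN4 : 4 ≤ N := by exact_mod_cast (le_max_left 3 ((B - A) / θ)).trans_lt hN
  rw [← hcI, image_image]
  refine dimEpsLE_one_image_Icc_natCast (hγ.comp (by fun_prop)) hN4 (fun u hu v hv huv => ?_) hη
    fun i hi => diam_le_of_forall_dist_le (by positivity) ?_
  · rcases hsep _ (hcmaps hu) _ (hcmaps hv) huv with h | ⟨h0, hB⟩ | ⟨hB, h0⟩
    · exact .inl (hc.injective h)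
    · exact .inr (.inl ⟨hc.injective (h0.trans hc0.symm), hc.injective (hB.trans hcN.symm)⟩)
    · exact .inr (.inr ⟨hc.injective (hB.trans hcN.symm), hc.injective (h0.trans hc0.symm)⟩)
  · rintro _ ⟨u, hu, rfl⟩ _ ⟨v, hv, rfl⟩
    have hI : Icc (i : ℝ) (i + 1) ⊆ Icc 0 N :=
      Icc_subset_Icc (Nat.cast_nonneg _) (by exact_mod_cast hi)
    refine (hγθ _ (hcmaps (hI hu)) _ (hcmaps (hI hv)) ?_).le
    have huv : |u - v| ≤ 1 := abs_sub_le_iff.2 ⟨by linarith [hu.2, hv.1], by linarith [hu.1, hv.2]⟩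
    calc dist (c u) (c v) = h * |u - v| := by
          rw [Real.dist_eq, ← abs_of_pos hh, ← abs_mul]; simp only [c]; ring_nf
      _ ≤ h := mul_le_of_le_one_right hh.le huv
      _ < θ := hhθ

theorem AddSubgroup.eq_top_or_exists_eq_zmultiples_of_isClosed {G : Type*} [AddCommGroup G]
    [LinearOrder G] [IsOrderedAddMonoid G] [TopologicalSpace G] [OrderTopology G] [Archimedean G]
    {S : AddSubgroup G} (hS : IsClosed (S : Set G)) :
    S = ⊤ ∨ ∃ p, 0 ≤ p ∧ S = AddSubgroup.zmultiples p := by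
  rcases S.dense_or_cyclic with hdense | ⟨a, rfl⟩
  · exact .inl (AddSubgroup.coe_eq_univ.1 (hS.closure_eq ▸ hdense.closure_eq))
  · exact .inr ⟨|a|, abs_nonneg a, by
      rw [zmultiples_abs, AddSubgroup.zmultiples_eq_closure]⟩

theorem eq_or_of_sub_mem_zmultiples {p s t : ℝ} (hp : 0 < p) (hs : s ∈ Icc 0 p)
    (ht : t ∈ Icc 0 p) (hst : t - s ∈ AddSubgroup.zmultiples p) :
    s = t ∨ s = 0 ∧ t = p ∨ s = p ∧ t = 0 := by
  obtain ⟨n, hn⟩ := AddSubgroup.mem_zmultiples_iff.1 hst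
  rw [zsmul_eq_mul] at hn
  have hn1 : (n : ℝ) < 2 := lt_of_mul_lt_mul_right (by linarith [hs.1, ht.2] : n * p < 2 * p) hp.le
  have hn2 : (-2 : ℝ) < n :=
    lt_of_mul_lt_mul_right (by linarith [hs.2, ht.1] : -2 * p < n * p) hp.le
  obtain rfl | rfl | rfl : n = -1 ∨ n = 0 ∨ n = 1 := by
    have : n < 2 := by exact_mod_cast hn1
    have : -2 < n := by exact_mod_cast hn2
    omega
  · refine .inr (.inr ⟨?_, ?_⟩) <;> push_cast at hn <;> linarith [hs.2, ht.1]
  · exact .inl (by push_cast at hn; linarith)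
  · refine .inr (.inl ⟨?_, ?_⟩) <;> push_cast at hn <;> linarith [hs.1, ht.2]

namespace Flow

variable {τ α : Type*} [TopologicalSpace τ] [AddCommGroup τ] [TopologicalSpace α] (ϕ : Flow τ α)

def periods (x : α) : AddSubgroup τ where
  carrier := {t | ϕ t x = x}
  zero_mem' := ϕ.map_zero_apply x
  add_mem' {s t} hs ht := by
    simp only [mem_ofPred_eq] at hs ht ⊢
    rw [map_add, ht, hs]
  neg_mem' {t} ht := by
    simp only [mem_ofPred_eq] at ht ⊢
    conv_lhs => rw [← ht, ← map_add, neg_add_cancel, map_zero_apply]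

theorem mem_periods {x : α} {t : τ} : t ∈ ϕ.periods x ↔ ϕ t x = x := Iff.rfl

theorem apply_eq_apply_iff_sub_mem_periods {x : α} {s t : τ} :
    ϕ s x = ϕ t x ↔ t - s ∈ ϕ.periods x := by
  have ht : ϕ t x = ϕ s (ϕ (t - s) x) := by rw [← map_add, add_sub_cancel]
  rw [mem_periods, ht, (ϕ.toHomeomorph s).injective.eq_iff (f := ϕ s), eq_comm]

theorem isClosed_periods [T1Space α] (x : α) : IsClosed (ϕ.periods x : Set τ) :=
  isClosed_singleton.preimage (ϕ.continuous continuous_id continuous_const)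

theorem periodic_of_mem_periods {x : α} {p : τ} (hp : p ∈ ϕ.periods x) :
    Function.Periodic (ϕ · x) p := fun t => by
  show ϕ (t + p) x = ϕ t x
  rw [map_add, (ϕ.mem_periods).1 hp]

end Flow

theorem Flow.dimEpsLE_one_image_Icc (ϕ : Flow ℝ X) (x : X) {a b η : ℝ} (hab : a < b)
    (hη : 0 < η) : DimEpsLE ((ϕ · x) '' Icc a b) η 1 := by
  have hγ : Continuous (ϕ · x) := ϕ.continuous continuous_id continuous_const
  rcases AddSubgroup.eq_top_or_exists_eq_zmultiples_of_isClosed (ϕ.isClosed_periods x) with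
    htop | ⟨p, hp, hG⟩
  · refine (dimEpsLE_singleton x hη 1).mono ?_
    rintro _ ⟨t, -, rfl⟩
    exact ϕ.mem_periods.1 (htop ▸ AddSubgroup.mem_top t)
  rcases hp.eq_or_lt with rfl | hp
  · refine _root_.dimEpsLE_one_image_Icc hγ hab (fun s _ t _ hst => .inl ?_) hη
    rwa [ϕ.apply_eq_apply_iff_sub_mem_periods, hG, AddSubgroup.zmultiples_zero_eq_bot,
      AddSubgroup.mem_bot, sub_eq_zero, eq_comm] at hst
  · refine (_root_.dimEpsLE_one_image_Icc hγ hp (fun s hs t ht hst => ?_) hη).mono ?_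
    · rw [ϕ.apply_eq_apply_iff_sub_mem_periods, hG] at hst
      exact eq_or_of_sub_mem_zmultiples hp hs ht hst
    · have hper := ϕ.periodic_of_mem_periods (hG ▸ AddSubgroup.mem_zmultiples p)
      have himage := hper.image_Icc hp 0
      rw [zero_add] at himage
      rw [himage]
      exact image_subset_range _ _

theorem IsCompact.exists_pos_forall_dist_apply_lt {τ α β : Type*} [PseudoMetricSpace τ]
    [PseudoMetricSpace α] [CompactSpace α] [PseudoMetricSpace β] {f : τ → α → β}
    (hf : Continuous (Function.uncurry f)) {K : Set τ} (hK : IsCompact K) {ε : ℝ} (hε : 0 < ε) :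
    ∃ δ > 0, ∀ u ∈ K, ∀ a b, dist a b < δ → dist (f u a) (f u b) < ε := by
  obtain ⟨δ, hδ, hfδ⟩ := Metric.uniformContinuousOn_iff.1
    ((hK.prod isCompact_univ).uniformContinuousOn_of_continuous hf.continuousOn) ε hε
  refine ⟨δ, hδ, fun u hu a b hab => hfδ (u, a) ⟨hu, trivial⟩ (u, b) ⟨hu, trivial⟩ ?_⟩
  simpa [Prod.dist_eq] using hab

theorem exists_int_abs_sub_mul_le (t : ℝ) {T : ℝ} (hT : T ≠ 0) : ∃ k : ℤ, |t - k * T| ≤ |T| := by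
  refine ⟨round (t / T), ?_⟩
  calc |t - round (t / T) * T| = |T| * |t / T - round (t / T)| := by
        rw [← abs_mul, mul_sub, mul_div_cancel₀ _ hT, mul_comm]
    _ ≤ |T| * 1 := by gcongr; linarith [abs_sub_round (t / T)]
    _ = |T| := mul_one _

theorem Flow.exists_pos_forall_dist_lt_of_forall_int_mul [CompactSpace X]
    (ϕ : Flow ℝ X) {T : ℝ} (hT : T ≠ 0) {ε : ℝ} (hε : 0 < ε) :
    ∃ δ > 0, ∀ x y, (∀ k : ℤ, dist (ϕ (k * T) x) (ϕ (k * T) y) < δ) →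
      ∀ t, dist (ϕ t x) (ϕ t y) < ε := by
  obtain ⟨δ, hδ, hϕδ⟩ := (isCompact_Icc (a := -|T|) (b := |T|)).exists_pos_forall_dist_apply_lt
    ϕ.cont' hε
  refine ⟨δ, hδ, fun x y hxy t => ?_⟩
  obtain ⟨k, hk⟩ := exists_int_abs_sub_mul_le t hT
  have ht : t = (t - k * T) + k * T := by ring
  rw [ht, map_add, map_add]
  exact hϕδ _ (abs_le.1 hk) _ _ (hxy k)

/-- The time-T map of a kinematic expansive flow on a compact metric space is
partially expansive with central dimension D = 1: there is δ > 0 such that every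
compact set of dimension > 1 has some iterate (image under φ at time kT) of
diameter ≥ δ. -/
theorem timeT_of_kinematic_expansive_partiallyExpansive {X : Type*} [MetricSpace X]
    [CompactSpace X] (φ : ℝ → X → X)
    (hcont : Continuous fun p : ℝ × X => φ p.1 p.2)
    (h0 : ∀ x, φ 0 x = x)
    (hadd : ∀ s t x, φ (s + t) x = φ s (φ t x))
    (hkin : ∀ ε : ℝ, 0 < ε → ∃ δ : ℝ, 0 < δ ∧ ∀ x y : X,
      (∀ t : ℝ, dist (φ t x) (φ t y) < δ) → ∃ s : ℝ, |s| < ε ∧ y = φ s x)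
    (T : ℝ) (hT : T ≠ 0) :
    ∃ δ : ℝ, 0 < δ ∧ ∀ C : Set X, IsCompact C → C.Nontrivial → DimGT C 1 →
      ∃ k : ℤ, δ ≤ Metric.diam (φ (k * T) '' C) := by
  let ϕ : Flow ℝ X := ⟨φ, hcont, hadd, h0⟩
  obtain ⟨δ₀, hδ₀, hexp⟩ := hkin 1 one_pos
  obtain ⟨δ, hδ, hshadow⟩ := ϕ.exists_pos_forall_dist_lt_of_forall_int_mul hT hδ₀
  refine ⟨δ, hδ, fun C hC hCnt hCdim => ?_⟩
  by_contra! hsmall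
  obtain ⟨x, hx⟩ := hCnt.nonempty
  have hsegment : C ⊆ (ϕ · x) '' Icc (-1) 1 := by
    intro y hy
    have hclose : ∀ k : ℤ, dist (ϕ (k * T) x) (ϕ (k * T) y) < δ := fun k =>
      (dist_le_diam_of_mem (hC.image (ϕ.continuous_toFun _)).isBounded (mem_image_of_mem _ hx)
        (mem_image_of_mem _ hy)).trans_lt (hsmall k)
    obtain ⟨s, hs, rfl⟩ := hexp x y (hshadow x y hclose)
    exact ⟨s, abs_le.1 hs.le, rfl⟩
  exact not_dimGT_of_forall_dimEpsLE
    (fun η hη => (ϕ.dimEpsLE_one_image_Icc x (by norm_num) hη).mono hsegment) hCdim
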